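/- Let K be a (possibly non-unital) ring with trivial left annihilator, meaning that for every non-zero x ∈ K there exists y ∈ K with x * y ≠ 0. Let S be the ring of n × n matrices over K, graded by ℤ via the diagonals: S_t is the additive subgroup of matrices M with M i j = 0 unless (j : ℤ) − (i : ℤ) = t. Then for every v ∈ ℤ and every non-zero x ∈ S_v there exists y ∈ S_{−v} with x * y ≠ 0. -/

import Mathlib

/-! A non-zero `x` of degree `v` has a non-zero entry `x i j`, necessarily with `j - i = v`.
Choosing `c` with `x i j * c ≠ 0`, the matrix unit `single j i c` has degree `i - j = -v`, and
the `(i, i)` entry of `x * single j i c` is `x i j * c`. -/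

namespace Matrix

theorem mul_single_ne_zero {l m n α : Type*} [Fintype m] [DecidableEq m] [DecidableEq n]
    [NonUnitalNonAssocSemiring α] {M : Matrix l m α} {a : l} {i : m} (j : n) {c : α}
    (h : M a i * c ≠ 0) : M * single i j c ≠ 0 := fun hM =>
  h <| by rw [← mul_single_apply_same c i j a M, hM, zero_apply]

theorem exists_ne_zero_apply {m n α : Type*} [Zero α] {M : Matrix m n α} (hM : M ≠ 0) :
    ∃ i j, M i j ≠ 0 := by
  by_contra! h
  exact hM (ext h)

end Matrix

open Matrix in
theorem matrix_diagonal_grading_nonannihilation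
    {K : Type*} [NonUnitalRing K]
    (hK : ∀ x : K, x ≠ 0 → ∃ y : K, x * y ≠ 0) {n : ℕ}
    (v : ℤ) (x : Matrix (Fin n) (Fin n) K)
    (hx : ∀ i j : Fin n, (j : ℤ) - (i : ℤ) ≠ v → x i j = 0) (hx0 : x ≠ 0) :
    ∃ y : Matrix (Fin n) (Fin n) K,
      (∀ i j : Fin n, (j : ℤ) - (i : ℤ) ≠ -v → y i j = 0) ∧ x * y ≠ 0 := by
  obtain ⟨i, j, hxij⟩ := exists_ne_zero_apply hx0
  have hv : (j : ℤ) - i = v := not_not.mp (mt (hx i j) hxij)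
  obtain ⟨c, hc⟩ := hK _ hxij
  refine ⟨single j i c, fun a b hab => single_apply_of_ne _ _ _ _ _ ?_, mul_single_ne_zero i hc⟩
  rintro ⟨rfl, rfl⟩
  omega
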